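/- Let θ : ℝ³ → ℝ³ be twice continuously differentiable and u : ℝ³ → ℝ³ be continuously differentiable, and suppose that at a point x ∈ ℝ³ the matrix I + Dθ(x) is invertible. Define Φ¹_θ u : ℝ³ → ℝ³ by (Φ¹_θ u)(y) = (I + Dθ(y)ᵀ) u(y + θ(y)). Then curl(Φ¹_θ u)(x) = det(I + Dθ(x)) (I + Dθ(x))⁻¹ (curl u)(x + θ(x)). (This is the commutation relation curl ∘ Φ¹_θ = Φ²_θ ∘ curl for smooth fields.) -/

import Mathlib

/-!
Write `φ = id + θ` and `A = Dφ(x) = I + Dθ(x)`; the field `Φ¹_θ u = Dφᵀ (u ∘ φ)` is the pullback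
of the 1-form `u` by `φ`. By the product and chain rules,
`D(Φ¹_θ u)(x) = Aᵀ Du(φ x) A + ∑ₘ uₘ(φ x) D²φₘ(x)`, and the second term is symmetric by Schwarz's
theorem, so it does not contribute to the curl. The curl of a Jacobian only sees its skew part, and
`Aᵀ W A` for a skew matrix `W` with axial vector `ω` is skew with axial vector `adj(A) ω`
(the identity `(Aa) × (Ab) = cof(A) (a × b)`). Finally `adj(A) = det(A) A⁻¹` for invertible `A`.
-/

open Matrix

/-- Jacobian matrix of a vector field on ℝ³ in Cartesian coordinates. -/
noncomputable def jacobian (v : (Fin 3 → ℝ) → (Fin 3 → ℝ)) (x : Fin 3 → ℝ) :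
    Matrix (Fin 3) (Fin 3) ℝ :=
  Matrix.of fun i j => fderiv ℝ v x (Pi.single j 1) i

/-- Curl of a vector field on ℝ³:
curl u = (∂₂u₃ − ∂₃u₂, ∂₃u₁ − ∂₁u₃, ∂₁u₂ − ∂₂u₁) (1-based indexing). -/
noncomputable def curl (u : (Fin 3 → ℝ) → (Fin 3 → ℝ)) (x : Fin 3 → ℝ) : Fin 3 → ℝ :=
  ![fderiv ℝ u x (Pi.single 1 1) 2 - fderiv ℝ u x (Pi.single 2 1) 1,
    fderiv ℝ u x (Pi.single 2 1) 0 - fderiv ℝ u x (Pi.single 0 1) 2,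
    fderiv ℝ u x (Pi.single 0 1) 1 - fderiv ℝ u x (Pi.single 1 1) 0]

section AxialVector

variable {R : Type*} [CommRing R]

/-- The axial vector of the skew part `M - Mᵀ`. -/
def axialVec (M : Matrix (Fin 3) (Fin 3) R) : Fin 3 → R :=
  ![M 2 1 - M 1 2, M 0 2 - M 2 0, M 1 0 - M 0 1]

lemma axialVec_add (M N : Matrix (Fin 3) (Fin 3) R) :
    axialVec (M + N) = axialVec M + axialVec N := by
  ext i; fin_cases i <;> simp [axialVec] <;> ring

lemma axialVec_eq_zero_of_isSymm {M : Matrix (Fin 3) (Fin 3) R} (hM : M.IsSymm) :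
    axialVec M = 0 := by
  ext i; fin_cases i <;> simp [axialVec, hM.apply]

lemma axialVec_transpose_mul_mul (A M : Matrix (Fin 3) (Fin 3) R) :
    axialVec (Aᵀ * M * A) = A.adjugate *ᵥ axialVec M := by
  ext i; fin_cases i <;>
    simp [axialVec, adjugate_fin_three, mulVec, dotProduct, Matrix.mul_apply,
      Fin.sum_univ_three] <;> ring

end AxialVector

variable {v w : (Fin 3 → ℝ) → (Fin 3 → ℝ)} {x : Fin 3 → ℝ}

lemma curl_eq_axialVec_jacobian (u : (Fin 3 → ℝ) → (Fin 3 → ℝ)) (x : Fin 3 → ℝ) :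
    curl u x = axialVec (jacobian u x) := rfl

lemma jacobian_eq_toMatrix' (v : (Fin 3 → ℝ) → (Fin 3 → ℝ)) (x : Fin 3 → ℝ) :
    jacobian v x = LinearMap.toMatrix' (fderiv ℝ v x : (Fin 3 → ℝ) →ₗ[ℝ] (Fin 3 → ℝ)) := rfl

lemma jacobian_comp (hv : DifferentiableAt ℝ v (w x)) (hw : DifferentiableAt ℝ w x) :
    jacobian (fun y => v (w y)) x = jacobian v (w x) * jacobian w x := by
  rw [jacobian_eq_toMatrix', fderiv_fun_comp x hv hw, ContinuousLinearMap.toLinearMap_comp,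
    LinearMap.toMatrix'_comp]; rfl

lemma jacobian_id_add (hv : DifferentiableAt ℝ v x) :
    jacobian (fun y => y + v y) x = 1 + jacobian v x := by
  rw [jacobian_eq_toMatrix', fderiv_fun_add differentiableAt_fun_id hv, fderiv_fun_id,
    ContinuousLinearMap.toLinearMap_add, map_add, ContinuousLinearMap.coe_id,
    LinearMap.toMatrix'_id]; rfl

lemma jacobian_apply (hv : DifferentiableAt ℝ v x) (i j : Fin 3) :
    jacobian v x i j = fderiv ℝ (fun y => v y i) x (Pi.single j 1) := by
  rw [fderiv_apply hv]; rfl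

lemma jacobian_transpose_mulVec {M : (Fin 3 → ℝ) → Matrix (Fin 3) (Fin 3) ℝ}
    (hM : ∀ i j, DifferentiableAt ℝ (fun y => M y i j) x) (hw : DifferentiableAt ℝ w x) :
    jacobian (fun y => (M y)ᵀ *ᵥ w y) x = (M x)ᵀ * jacobian w x +
      Matrix.of fun i j => ∑ m, w x m * fderiv ℝ (fun y => M y m i) x (Pi.single j 1) := by
  have hwi (m : Fin 3) : DifferentiableAt ℝ (fun y => w y m) x := differentiableAt_pi.1 hw m
  have hvi (i : Fin 3) : DifferentiableAt ℝ (fun y => ∑ m, M y m i * w y m) x := by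
    fun_prop
  have hv : (fun y => (M y)ᵀ *ᵥ w y) = fun y i => ∑ m, M y m i * w y m := rfl
  ext i j
  rw [hv, jacobian_apply (differentiableAt_pi.2 hvi), fderiv_fun_sum fun m _ => by fun_prop]
  simp only [_root_.sum_apply, fderiv_fun_mul (hM _ _) (hwi _),
    _root_.add_apply, _root_.smul_apply, smul_eq_mul,
    Finset.sum_add_distrib, Matrix.add_apply, Matrix.mul_apply, Matrix.of_apply,
    Matrix.transpose_apply, jacobian_apply hw]

lemma hasFDerivAt_jacobian_apply (hv : DifferentiableAt ℝ (fderiv ℝ v) x) (i j : Fin 3) :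
    HasFDerivAt (fun y => jacobian v y i j)
      (((ContinuousLinearMap.proj i : (Fin 3 → ℝ) →L[ℝ] ℝ).comp
        (ContinuousLinearMap.apply ℝ (Fin 3 → ℝ) (Pi.single j 1))).comp
          (fderiv ℝ (fderiv ℝ v) x)) x :=
  (((ContinuousLinearMap.proj i : (Fin 3 → ℝ) →L[ℝ] ℝ).comp
    (ContinuousLinearMap.apply ℝ (Fin 3 → ℝ) (Pi.single j 1))).hasFDerivAt.comp x hv.hasFDerivAt :)

theorem curl_pullback {φ u : (Fin 3 → ℝ) → (Fin 3 → ℝ)} (hφ : ContDiffAt ℝ 2 φ x)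
    (hu : DifferentiableAt ℝ u (φ x)) :
    curl (fun y => (jacobian φ y)ᵀ *ᵥ u (φ y)) x = (jacobian φ x).adjugate *ᵥ curl u (φ x) := by
  have hφd : DifferentiableAt ℝ φ x := hφ.differentiableAt two_ne_zero
  have hφ' : DifferentiableAt ℝ (fderiv ℝ φ) x :=
    (hφ.fderiv_right (m := 1) le_rfl).differentiableAt one_ne_zero
  have hsymm : IsSymmSndFDerivAt ℝ φ x := hφ.isSymmSndFDerivAt (by simp)
  have hS : (Matrix.of fun i j =>
      ∑ m, u (φ x) m * fderiv ℝ (fun y => jacobian φ y m i) x (Pi.single j 1)).IsSymm := by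
    ext i j
    simp [(hasFDerivAt_jacobian_apply hφ' _ _).fderiv, hsymm.eq (Pi.single i 1)]
  rw [curl_eq_axialVec_jacobian,
    jacobian_transpose_mulVec (w := fun y => u (φ y))
      (fun i j => (hasFDerivAt_jacobian_apply hφ' i j).differentiableAt) (hu.comp x hφd),
    jacobian_comp hu hφd, ← mul_assoc, axialVec_add, axialVec_transpose_mul_mul,
    axialVec_eq_zero_of_isSymm hS, add_zero, curl_eq_axialVec_jacobian]

theorem stmt_7 (θ u : (Fin 3 → ℝ) → (Fin 3 → ℝ))
    (hθ : ContDiff ℝ 2 θ) (hu : ContDiff ℝ 1 u) (x : Fin 3 → ℝ)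
    (hinv : IsUnit ((1 : Matrix (Fin 3) (Fin 3) ℝ) + jacobian θ x).det) :
    curl (fun y => ((1 : Matrix (Fin 3) (Fin 3) ℝ) + (jacobian θ y)ᵀ) *ᵥ u (y + θ y)) x
      = ((1 : Matrix (Fin 3) (Fin 3) ℝ) + jacobian θ x).det •
          (((1 : Matrix (Fin 3) (Fin 3) ℝ) + jacobian θ x)⁻¹ *ᵥ curl u (x + θ x)) := by
  have hθd : Differentiable ℝ θ := hθ.differentiable two_ne_zero
  have hpullback : (fun y => (1 + (jacobian θ y)ᵀ) *ᵥ u (y + θ y)) =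
      fun y => (jacobian (fun z => z + θ z) y)ᵀ *ᵥ u (y + θ y) := by
    ext y : 1
    rw [jacobian_id_add (hθd y), transpose_add, transpose_one]
  rw [hpullback, curl_pullback (by fun_prop : ContDiff ℝ 2 fun z => z + θ z).contDiffAt
      (hu.differentiable one_ne_zero _), jacobian_id_add (hθd x),
    det_smul_inv_mulVec_eq_cramer _ _ hinv, cramer_eq_adjugate_mulVec]
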